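/- Let f be convex, differentiable, L-smooth with minimizer x*, and μ ≥ 0 its strong convexity modulus. For differentiable positive functions A_t, B_t and parameters η_t = (dA_t/dt)/A_t, η_t' = (dB_t/dt)/B_t, γ_t = 1/L, γ_t' = √(A_t/(L·B_t)), assume dA/dt = √(A_tB_t/L) and dB/dt = μ√(A_tB_t/L). Then for any x, z ∈ ℝᵈ, the drift quantity I := (dA_t/dt)(f(x)-f(x*)) + (dB_t/dt)(1/2)‖z-x*‖² + A_tη_t⟨∇f(x), z-x⟩ + B_tη_t'⟨z-x*, x-z⟩ + A_t(f(x - γ_t∇f(x)) - f(x)) + (B_t/2)(‖z - γ_t'∇f(x) - x*‖² - ‖z-x*‖²) is ≤ 0. -/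
import Mathlib


open scoped RealInnerProductSpace

theorem continuized_drift_nonpositive {d : ℕ} (L μ : ℝ) (hL : 0 < L) (hμ : 0 ≤ μ)
    (f : EuclideanSpace ℝ (Fin d) → ℝ)
    (g : EuclideanSpace ℝ (Fin d) → EuclideanSpace ℝ (Fin d))
    (hgrad : ∀ x, HasGradientAt f (g x) x)
    (hsmooth : ∀ x y, f y ≤ f x + ⟪g x, y - x⟫ + L / 2 * ‖y - x‖ ^ 2)
    (hstrong : ∀ x y, f x + ⟪g x, y - x⟫ + μ / 2 * ‖y - x‖ ^ 2 ≤ f y)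
    (xstar : EuclideanSpace ℝ (Fin d)) (hmin : ∀ y, f xstar ≤ f y)
    (At Bt dAt dBt ηt ηt' γt γt' : ℝ)
    (hAt : 0 < At) (hBt : 0 < Bt)
    (hdA : dAt = Real.sqrt (At * Bt / L)) (hdB : dBt = μ * Real.sqrt (At * Bt / L))
    (hη : ηt = dAt / At) (hη' : ηt' = dBt / Bt)
    (hγ : γt = 1 / L) (hγ' : γt' = Real.sqrt (At / (L * Bt))) :
    ∀ x z : EuclideanSpace ℝ (Fin d),
      dAt * (f x - f xstar) + dBt * ((1 / 2) * ‖z - xstar‖ ^ 2)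
        + At * ηt * ⟪g x, z - x⟫ + Bt * ηt' * ⟪z - xstar, x - z⟫
        + At * (f (x - γt • g x) - f x)
        + (Bt / 2) * (‖z - γt' • g x - xstar‖ ^ 2 - ‖z - xstar‖ ^ 2) ≤ 0 := by
  subst hη hη' hγ hγ' hdA hdB
  intro x z
  set s := Real.sqrt (At * Bt / L) with hsdef
  have hs : 0 ≤ s := Real.sqrt_nonneg _
  have hsq : s ^ 2 = At * Bt / L := Real.sq_sqrt (by positivity)
  have hγ'2 : (s / Bt) ^ 2 = At / (L * Bt) := by
    rw [div_pow, hsq]; field_simp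
  have hγ's : Real.sqrt (At / (L * Bt)) = s / Bt := by
    rw [← hγ'2, Real.sqrt_sq (by positivity)]
  have hc1 : At * (s / At) = s := by field_simp
  have hc2 : Bt * (μ * s / Bt) = μ * s := by field_simp
  set G := ‖g x‖ ^ 2 with hG
  have hGnn : 0 ≤ G := by positivity
  -- smoothness step: gradient descent step decreases f
  have hsm := hsmooth x (x - (1 / L : ℝ) • g x)
  have e : x - (1 / L : ℝ) • g x - x = -((1 / L : ℝ) • g x) := by abel
  rw [e, inner_neg_right, real_inner_smul_right, real_inner_self_eq_norm_sq, norm_neg,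
    norm_smul, Real.norm_eq_abs, abs_of_nonneg (by positivity), mul_pow] at hsm
  have A1 : f (x - (1 / L : ℝ) • g x) - f x ≤ -(G / (2 * L)) := by
    have h1 : L / 2 * ((1 / L) ^ 2 * G) = G / (2 * L) := by field_simp
    have h2 : (1 / L) * G = G / L := by ring
    have h3 : G / L - G / (2 * L) = G / (2 * L) := by field_simp; ring
    rw [← hG] at hsm
    nlinarith [hsm]
  have hB1 : At * (f (x - (1 / L : ℝ) • g x) - f x) ≤ -(At * (G / (2 * L))) := by
    have h := mul_le_mul_of_nonneg_left A1 hAt.le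
    linarith [h]
  -- strong convexity step
  have A2 : f x - f xstar + ⟪g x, xstar - x⟫ ≤ -(μ / 2 * ‖x - xstar‖ ^ 2) := by
    have h := hstrong x xstar
    rw [norm_sub_rev] at h
    linarith
  have hB2 : s * (f x - f xstar + ⟪g x, xstar - x⟫) ≤ s * (-(μ / 2 * ‖x - xstar‖ ^ 2)) :=
    mul_le_mul_of_nonneg_left A2 hs
  -- expansion of the z-update norm
  have hPQ : ⟪g x, z - xstar⟫ = ⟪g x, z - x⟫ - ⟪g x, xstar - x⟫ := by
    rw [← inner_sub_right]
    congr 1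
    abel
  have e2 : z - (s / Bt) • g x - xstar = (z - xstar) - (s / Bt) • g x := by abel
  have hnorm : ‖z - (s / Bt) • g x - xstar‖ ^ 2
      = ‖z - xstar‖ ^ 2 - 2 * ((s / Bt) * ⟪g x, z - xstar⟫) + At / (L * Bt) * G := by
    rw [e2, norm_sub_sq_real, real_inner_smul_right, norm_smul, Real.norm_eq_abs,
      abs_of_nonneg (by positivity), mul_pow, hγ'2, real_inner_comm]
  have hc3 : (Bt / 2) * (‖z - (s / Bt) • g x - xstar‖ ^ 2 - ‖z - xstar‖ ^ 2)
      = -(s * (⟪g x, z - x⟫ - ⟪g x, xstar - x⟫)) + At * (G / (2 * L)) := by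
    rw [hnorm, ← hPQ]
    field_simp
    ring
  -- the μ-term identity
  have A4 : ‖z - xstar‖ ^ 2 / 2 + ⟪z - xstar, x - z⟫ - ‖x - xstar‖ ^ 2 / 2
      = -(1 / 2 * ‖z - x‖ ^ 2) := by
    have h1 : x - z = (x - xstar) - (z - xstar) := by abel
    have h2 : z - x = (z - xstar) - (x - xstar) := by abel
    rw [h1, inner_sub_right, real_inner_self_eq_norm_sq, h2,
      norm_sub_sq_real (z - xstar) (x - xstar)]
    ring
  have hB3 : μ * s * (‖z - xstar‖ ^ 2 / 2 + ⟪z - xstar, x - z⟫ - ‖x - xstar‖ ^ 2 / 2) ≤ 0 := by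
    rw [A4]
    have hnn : 0 ≤ μ * s * (1 / 2 * ‖z - x‖ ^ 2) := by positivity
    linarith [hnn]
  rw [hγ's, hc1, hc2, hc3]
  linarith [hB1, hB2, hB3]
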